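/- Let λ be a partition of n having two parts a and b with a ≥ b > 0 (occurring as distinct parts, possibly of equal value), and let μ be the partition of n obtained from λ by replacing these two parts with a+1 and b−1 (deleting b−1 if it equals 0) and reordering into nonincreasing form. Then h(μ) < h(λ), where h denotes the height function. -/

import Mathlib

/-!
Sorting the parts decreasingly, `Σ i·λ_i = Σ_i λ_i + Σ_{i<j} min(λ_i, λ_j)`, so
`2 h(λ) = n + Σ_{x,y} min(x, y)` with `x, y` running over the parts with multiplicity; this
no longer depends on the order of the parts, and parts equal to `0` do not contribute.
Replacing `a, b` by `a + 1, b - 1` lowers `min(a, b) = b` by one, and for every other part `y`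
it changes `min(a, y) + min(b, y)` by `[y > a] - [y ≥ b] ≤ 0`; hence the double sum drops by at
least `2`.
-/

/-- The parts of a partition listed in nonincreasing order. -/
def sortedParts {n : ℕ} (p : Nat.Partition n) : List ℕ :=
  (p.parts.sort (· ≤ ·)).reverse

/-- The height `h(λ) = Σ i·λ_i`, where `λ_1 ≥ λ_2 ≥ …` are the parts in
nonincreasing order. -/
def height {n : ℕ} (p : Nat.Partition n) : ℕ :=
  ((sortedParts p).zipIdx.map (fun x => (x.2 + 1) * x.1)).sum

def minPairSum (s : Multiset ℕ) : ℕ :=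
  (s.map fun x => (s.map fun y => min x y).sum).sum

lemma minPairSum_cons (x : ℕ) (s : Multiset ℕ) :
    minPairSum (x ::ₘ s) = x + 2 * (s.map (min x)).sum + minPairSum s := by
  have hsymm : (s.map fun y => min y x).sum = (s.map (min x)).sum := by
    simp only [min_comm]
  simp only [minPairSum, Multiset.map_cons, Multiset.sum_cons, min_self, Multiset.sum_map_add,
    hsymm]
  ring

lemma minPairSum_cons_zero (s : Multiset ℕ) : minPairSum (0 ::ₘ s) = minPairSum s := by
  simp [minPairSum_cons]

lemma minPairSum_transfer_add_two_le {a b : ℕ} (hb : 0 < b) (hab : b ≤ a) (s : Multiset ℕ) :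
    minPairSum ((a + 1) ::ₘ (b - 1) ::ₘ s) + 2 ≤ minPairSum (a ::ₘ b ::ₘ s) := by
  have hpoint : ∀ y ∈ s, min (a + 1) y + min (b - 1) y ≤ min a y + min b y := by
    intro y _
    omega
  have hsum := Multiset.sum_map_le_sum_map _ _ hpoint
  simp only [Multiset.sum_map_add] at hsum
  simp only [minPairSum_cons, Multiset.map_cons, Multiset.sum_cons]
  omega

lemma List.sum_map_zipIdx_succ (L : List ℕ) (k : ℕ) :
    ((L.zipIdx (k + 1)).map fun x => (x.2 + 1) * x.1).sum
      = ((L.zipIdx k).map fun x => (x.2 + 1) * x.1).sum + L.sum := by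
  induction L generalizing k with
  | nil => simp
  | cons x L ih => simp only [List.zipIdx_cons, List.map_cons, List.sum_cons, ih]; ring

lemma List.two_mul_sum_map_zipIdx_of_pairwise_ge {L : List ℕ} (hL : L.Pairwise (· ≥ ·)) :
    2 * ((L.zipIdx.map fun x => (x.2 + 1) * x.1).sum) = L.sum + minPairSum L := by
  induction L with
  | nil => simp [minPairSum]
  | cons x L ih =>
    have hmin : (L.map (min x)).sum = L.sum := by
      rw [List.map_congr_left fun y hy => min_eq_right (List.rel_of_pairwise_cons hL hy),
        List.map_id']
    have hmin' : ((L : Multiset ℕ).map (min x)).sum = L.sum := by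
      rw [Multiset.map_coe, Multiset.sum_coe, hmin]
    rw [← Multiset.cons_coe, minPairSum_cons, hmin', List.zipIdx_cons, List.map_cons,
      List.sum_cons, List.sum_map_zipIdx_succ, List.sum_cons]
    have := ih hL.of_cons
    simp only [zero_add] at this ⊢
    omega

lemma coe_sortedParts {n : ℕ} (p : Nat.Partition n) : (sortedParts p : Multiset ℕ) = p.parts := by
  rw [sortedParts, ← Multiset.coe_reverse, List.reverse_reverse, Multiset.sort_eq]

lemma two_mul_height {n : ℕ} (p : Nat.Partition n) : 2 * height p = n + minPairSum p.parts := by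
  have hsorted : (sortedParts p).Pairwise (· ≥ ·) :=
    List.pairwise_reverse.mpr (Multiset.pairwise_sort p.parts (· ≤ ·))
  rw [height, List.two_mul_sum_map_zipIdx_of_pairwise_ge hsorted, ← Multiset.sum_coe,
    coe_sortedParts, p.parts_sum]

/-- Transferring a unit from a part `b` to a part `a` with `a ≥ b > 0`
(occurring as distinct parts), deleting `b - 1` if it becomes `0`, strictly
decreases the height. -/
theorem height_lt_of_transfer {n : ℕ} (l m : Nat.Partition n) (a b : ℕ)
    (rest : Multiset ℕ) (hb : 0 < b) (hab : b ≤ a)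
    (hl : l.parts = a ::ₘ b ::ₘ rest)
    (hm : m.parts = (a + 1) ::ₘ (if b = 1 then rest else (b - 1) ::ₘ rest)) :
    height m < height l := by
  have hm' : minPairSum m.parts = minPairSum ((a + 1) ::ₘ (b - 1) ::ₘ rest) := by
    split_ifs at hm with hb1
    · rw [hm, hb1, Nat.sub_self, Multiset.cons_swap, minPairSum_cons_zero]
    · rw [hm]
  have hdrop := minPairSum_transfer_add_two_le hb hab rest
  have hl2 := two_mul_height l
  have hm2 := two_mul_height m
  rw [hl] at hl2
  omega
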